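/- Let d ≥ 3 be odd, j ∈ F_q^*, and suppose d = 4k+1 with j not a square, or d = 4k−1 with −j not a square. Then the sphere S_j = {x ∈ F_q^d : x_1² + ⋯ + x_d² = j} contains an affine subspace of cardinality q^{(d−3)/2}. -/
import Mathlib


open Finset

private lemma my_sq_add_sq {F : Type*} [Field F] [Fintype F]
    (hodd : Fintype.card F % 2 = 1) (x : F) : ∃ a b : F, a ^ 2 + b ^ 2 = x := by
  obtain ⟨a, b, hab⟩ : ∃ a b : F,
      (Polynomial.X ^ 2 : Polynomial F).eval a
        + (Polynomial.X ^ 2 - Polynomial.C x).eval b = 0 :=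
    FiniteField.exists_root_sum_quadratic (Polynomial.degree_X_pow 2)
      (Polynomial.degree_X_pow_sub_C (by norm_num) _) hodd
  refine ⟨a, b, ?_⟩
  simp only [Polynomial.eval_pow, Polynomial.eval_X, Polynomial.eval_sub,
    Polynomial.eval_C] at hab
  linear_combination hab

private def pr (n : ℕ) : ℕ := if n % 2 = 0 then n + 1 else n - 1

private lemma pr_inj {m n : ℕ} (h : pr m = pr n) : m = n := by
  unfold pr at h; split_ifs at h <;> omega

private lemma pr_ne (n : ℕ) : pr n ≠ n := by unfold pr; split_ifs <;> omega

private lemma pr_le {n k : ℕ} (h : n < k) : pr n ≤ k := by unfold pr; split_ifs <;> omega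

private lemma pr_pr (n : ℕ) : pr (pr n) = n := by unfold pr; split_ifs <;> omega

private lemma pr_parity (n : ℕ) : pr n % 2 ≠ n % 2 := by unfold pr; split_ifs <;> omega

private lemma sphere_aux {F : Type*} [Field F] [Fintype F]
    (hodd : Fintype.card F % 2 = 1) (k : ℕ) (j : F) :
    ∃ (W : Submodule F (Fin (2 * k + 3) → F)) (v : Fin (2 * k + 3) → F),
      (∀ w ∈ W, ∑ i, (v i + w i) ^ 2 = j) ∧
      Nat.card W = Fintype.card F ^ k := by
  classical
  obtain ⟨a, b, hab⟩ := my_sq_add_sq hodd (-1 : F)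
  obtain ⟨c1, c2, hc⟩ := my_sq_add_sq hodd j
  set d := 2 * k + 3 with hd
  have hsingle : ∀ (p q : Fin d) (x y : F),
      (∑ m, Pi.single p x m * Pi.single q y m) = if p = q then x * y else 0 := by
    intro p q x y
    rw [Finset.sum_eq_single p]
    · simp [Pi.single_apply, eq_comm]
    · intro m _ hm
      simp [Pi.single_apply, hm]
    · simp
  let ε : ℕ → F := fun n => if n % 2 = 0 then 1 else -1
  have hεsq : ∀ n, ε n * ε n = 1 := by
    intro n; simp only [ε]; split_ifs <;> ring
  have hεpr : ∀ n, ε (pr n) = - ε n := by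
    intro n; have := pr_parity n; simp only [ε]; split_ifs <;> first | omega | ring
  let w : Fin k → Fin d → F := fun i =>
    Pi.single ⟨(i : ℕ), by have := i.isLt; omega⟩ 1
      + Pi.single ⟨k + (i : ℕ), by have := i.isLt; omega⟩ a
      + Pi.single ⟨k + pr (i : ℕ), by have := pr_le i.isLt; omega⟩ (ε (i : ℕ) * b)
  have hww : ∀ i i' : Fin k, ∑ m, w i m * w i' m = 0 := by
    intro i i'
    have hi := i.isLt
    have hi' := i'.isLt
    have hple := pr_le hi
    have hple' := pr_le hi'
    have hpne := pr_ne (i : ℕ)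
    have hpne' := pr_ne (i' : ℕ)
    simp only [w, Pi.add_apply, add_mul, mul_add, Finset.sum_add_distrib, hsingle,
      Fin.mk.injEq]
    rcases eq_or_ne i i' with rfl | hne
    · rw [if_pos rfl, if_neg (by omega), if_neg (by omega), if_neg (by omega),
        if_pos rfl, if_neg (by omega), if_neg (by omega), if_neg (by omega), if_pos rfl]
      linear_combination hab + b ^ 2 * hεsq (i : ℕ)
    · have h : (i : ℕ) ≠ (i' : ℕ) := fun hh => hne (Fin.ext hh)
      have hppne : pr (i : ℕ) ≠ pr (i' : ℕ) := fun hh => h (pr_inj hh)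
      rcases eq_or_ne (i : ℕ) (pr (i' : ℕ)) with h6 | h6
      · have h8 : pr (i : ℕ) = (i' : ℕ) := by rw [h6, pr_pr]
        have hrel : ε (i : ℕ) = - ε (i' : ℕ) := by rw [h6, hεpr]
        rw [if_neg (by omega), if_neg (by omega), if_neg (by omega), if_neg (by omega),
          if_neg (by omega), if_pos (by omega), if_neg (by omega), if_pos (by omega),
          if_neg (by omega)]
        linear_combination (a * b) * hrel
      · have h8 : pr (i : ℕ) ≠ (i' : ℕ) := fun hh => h6 (by rw [← hh, pr_pr])
        rw [if_neg (by omega), if_neg (by omega), if_neg (by omega), if_neg (by omega),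
          if_neg (by omega), if_neg (by omega), if_neg (by omega), if_neg (by omega),
          if_neg (by omega)]
        ring
  let v : Fin d → F := Pi.single ⟨2 * k + 1, by omega⟩ c1 + Pi.single ⟨2 * k + 2, by omega⟩ c2
  have hvv : ∑ m, v m * v m = j := by
    simp only [v, Pi.add_apply, add_mul, mul_add, Finset.sum_add_distrib, hsingle,
      Fin.mk.injEq]
    rw [if_neg (show ¬(2 * k + 2 = 2 * k + 1) by omega),
      if_neg (show ¬(2 * k + 1 = 2 * k + 2) by omega)]
    simp only [if_true, eq_self_iff_true, if_pos rfl]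
    linear_combination hc
  have hvw : ∀ i : Fin k, ∑ m, v m * w i m = 0 := by
    intro i
    have hi := i.isLt
    have hple := pr_le hi
    simp only [v, w, Pi.add_apply, add_mul, mul_add, Finset.sum_add_distrib, hsingle,
      Fin.mk.injEq]
    rw [if_neg (by omega), if_neg (by omega), if_neg (by omega), if_neg (by omega),
      if_neg (by omega), if_neg (by omega)]
    ring
  let φ : (Fin k → F) →ₗ[F] (Fin d → F) :=
    { toFun := fun t => ∑ i, t i • w i
      map_add' := by intro x y; simp [add_smul, Finset.sum_add_distrib]
      map_smul' := by intro c x; simp [smul_smul, Finset.smul_sum] }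
  have hφapp : ∀ (t : Fin k → F) (m : Fin d), φ t m = ∑ i, t i * w i m := by
    intro t m
    show (∑ i, t i • w i) m = _
    rw [Finset.sum_apply]
    simp
  have heval : ∀ (t : Fin k → F) (i : Fin k),
      φ t ⟨(i : ℕ), by have := i.isLt; omega⟩ = t i := by
    intro t i
    rw [hφapp]
    rw [Finset.sum_eq_single i]
    · have hi := i.isLt
      have hp := pr_le hi
      simp only [w, Pi.add_apply, Pi.single_apply, Fin.mk.injEq]
      rw [if_neg (show ¬((i : ℕ) = k + (i : ℕ)) by omega),
        if_neg (show ¬((i : ℕ) = k + pr (i : ℕ)) by omega)]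
      simp
    · intro i' _ hne
      have h : (i : ℕ) ≠ (i' : ℕ) := fun hh => hne (Fin.ext hh).symm
      have hi' := i'.isLt
      have hp' := pr_le hi'
      simp only [w, Pi.add_apply, Pi.single_apply, Fin.mk.injEq]
      rw [if_neg (show ¬((i : ℕ) = (i' : ℕ)) from h),
        if_neg (show ¬((i : ℕ) = k + (i' : ℕ)) by omega),
        if_neg (show ¬((i : ℕ) = k + pr (i' : ℕ)) by omega)]
      ring
    · simp
  have hφinj : Function.Injective φ := by
    rw [← LinearMap.ker_eq_bot, LinearMap.ker_eq_bot']
    intro t ht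
    funext i
    have := heval t i
    rw [ht] at this
    simpa using this.symm
  refine ⟨LinearMap.range φ, v, ?_, ?_⟩
  · rintro u ⟨t, rfl⟩
    have hsq : ∑ m, φ t m * φ t m = 0 := by
      have e1 : ∀ m, φ t m * φ t m = ∑ i, ∑ i', t i * t i' * (w i m * w i' m) := by
        intro m
        rw [hφapp, Finset.sum_mul_sum]
        exact Finset.sum_congr rfl fun i _ => Finset.sum_congr rfl fun i' _ => by ring
      calc ∑ m, φ t m * φ t m = ∑ m, ∑ i, ∑ i', t i * t i' * (w i m * w i' m) :=
            Finset.sum_congr rfl fun m _ => e1 m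
        _ = ∑ i, ∑ m, ∑ i', t i * t i' * (w i m * w i' m) := Finset.sum_comm
        _ = ∑ i, ∑ i', ∑ m, t i * t i' * (w i m * w i' m) :=
            Finset.sum_congr rfl fun i _ => Finset.sum_comm
        _ = 0 := by
            refine Finset.sum_eq_zero fun i _ => Finset.sum_eq_zero fun i' _ => ?_
            rw [← Finset.mul_sum, hww, mul_zero]
    have hcross : ∑ m, v m * φ t m = 0 := by
      have e1 : ∀ m, v m * φ t m = ∑ i, t i * (v m * w i m) := by
        intro m; rw [hφapp, Finset.mul_sum]
        exact Finset.sum_congr rfl fun i _ => by ring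
      calc ∑ m, v m * φ t m = ∑ m, ∑ i, t i * (v m * w i m) :=
            Finset.sum_congr rfl fun m _ => e1 m
        _ = ∑ i, ∑ m, t i * (v m * w i m) := Finset.sum_comm
        _ = 0 := Finset.sum_eq_zero fun i _ => by rw [← Finset.mul_sum, hvw, mul_zero]
    calc ∑ m, (v m + φ t m) ^ 2
        = ∑ m, (v m * v m + 2 * (v m * φ t m) + φ t m * φ t m) :=
          Finset.sum_congr rfl fun m _ => by ring
      _ = (∑ m, v m * v m) + 2 * (∑ m, v m * φ t m) + ∑ m, φ t m * φ t m := by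
          rw [Finset.sum_add_distrib, Finset.sum_add_distrib, Finset.mul_sum]
      _ = j := by rw [hvv, hcross, hsq]; ring
  · have h1 : Nat.card (LinearMap.range φ) = Nat.card (Fin k → F) := by
      rw [← Nat.card_range_of_injective hφinj]
      rfl
    rw [h1, Nat.card_eq_fintype_card, Fintype.card_fun, Fintype.card_fin]

/-- For odd `d ≥ 3`, `j ≠ 0`, with `d ≡ 1 (mod 4)` and `j` not a square, or
`d ≡ 3 (mod 4)` and `−j` not a square, the sphere `{x : ‖x‖ = j} ⊂ F_q^d`
contains an affine subspace of cardinality `q^{(d-3)/2}`. -/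
theorem stmt_4 {F : Type*} [Field F] [Fintype F] (hodd : Odd (Fintype.card F))
    (d : ℕ) (hd3 : 3 ≤ d) (j : F) (hj : j ≠ 0)
    (hcase : (d % 4 = 1 ∧ ¬IsSquare j) ∨ (d % 4 = 3 ∧ ¬IsSquare (-j))) :
    ∃ (W : Submodule F (Fin d → F)) (v : Fin d → F),
      (∀ w ∈ W, ∑ i, (v i + w i) ^ 2 = j) ∧
      Nat.card W = Fintype.card F ^ ((d - 3) / 2) := by
  have hodd' : Fintype.card F % 2 = 1 := Nat.odd_iff.mp hodd
  have hd4 : d % 4 = 1 ∨ d % 4 = 3 := by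
    rcases hcase with ⟨h, _⟩ | ⟨h, _⟩ <;> [left; right] <;> exact h
  obtain ⟨k, rfl⟩ : ∃ k, d = 2 * k + 3 := ⟨(d - 3) / 2, by omega⟩
  obtain ⟨W, v, h1, h2⟩ := sphere_aux hodd' k j
  refine ⟨W, v, h1, ?_⟩
  rw [h2]
  congr 1
  omega
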